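/- E-MAJSAT reduction correctness: Let φ be a Boolean formula in variables x₁, …, xₙ, let 0 ≤ k < n, and let m = 2^{n−k−1}. Work over the natural-number semiring ℕ = (ℕ, +, ·, 0, 1), with variables ranging over the domain {0,1}, and let φ̂(X̄) be a weighted formula such that for every ā ∈ {0,1}ⁿ and every pointed HT-interpretation I_w considered, ⟦φ̂(ā)⟧_ℕ(I_w) = 1 if φ(ā) is true and 0 otherwise. Consider the AC-program Π = { v(0) ←, v(1) ←, f ← v(X₁), …, v(X_k), m <_ℕ v(X_{k+1}) * ⋯ * v(Xₙ) * φ̂(X̄) }, where X_{k+1}, …, Xₙ are local variables of the last rule and X₁, …, X_k are global. Then: {f, v(0), v(1)} is an equilibrium model of Π if and only if there exists an assignment (a₁, …, a_k) ∈ {0,1}^k such that the number of extensions (a_{k+1}, …, aₙ) ∈ {0,1}^{n−k} with φ(a₁,…,aₙ) true is greater than m; and {v(0), v(1)} is an equilibrium model of Π if and only if no such assignment exists. -/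

import Mathlib

/-- The two worlds of HT logic. -/
inductive W : Type | H | T
deriving DecidableEq

/-- `W.le w w'` means `w' ≥ w` in the HT order (with `T ≥ H`). -/
def W.le : W → W → Prop
  | .H, _ => True
  | .T, w' => w' = .T

/-- The ground atoms of the E-MAJSAT program: `v(0), v(1)` (domain `{0,1}`
    encoded as `Bool`) and `f`. -/
inductive GAtom : Type | v (b : Bool) | f
deriving DecidableEq

/-- An HT-interpretation: a pair of sets of atoms with `h ⊆ t`. -/
structure HTI where
  h : Set GAtom
  t : Set GAtom
  sub : h ⊆ t

/-- The component of a pointed HT-interpretation at world `w`. -/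
def HTI.at (I : HTI) : W → Set GAtom
  | .H => I.h
  | .T => I.t

/-- Combine an assignment to `x₁,…,x_k` with an assignment to `x_{k+1},…,x_n`. -/
def comb {n k : ℕ} (hk : k < n) (γ : Fin k → Bool) (lam : Fin (n - k) → Bool) :
    Fin n → Bool :=
  fun i => if h : (i : ℕ) < k then γ ⟨i, h⟩ else lam ⟨(i : ℕ) - k, by omega⟩

open Classical in
/-- `⟦Σ X_{k+1} … X_n  v(X_{k+1}) * ⋯ * v(X_n) * φ̂(X̄)⟧_ℕ(I_w)` for the global
    assignment `γ`: the sum over all assignments `lam` to the local variables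
    (which range over the finite domain `{0,1}`, so the support is finite and the
    sum over the support equals the sum over all assignments) of the product of
    the values of the atoms `v(lam j)` times the value of `φ̂`, which by hypothesis
    is `1` if `φ` is true under the combined assignment and `0` otherwise. -/
noncomputable def sVal {n k : ℕ} (hk : k < n) (φ : (Fin n → Bool) → Bool)
    (I : HTI) (w : W) (γ : Fin k → Bool) : ℕ :=
  ∑ lam : Fin (n - k) → Bool,
    (∏ j : Fin (n - k), if GAtom.v (lam j) ∈ I.at w then 1 else 0) *
      (if φ (comb hk γ lam) = true then 1 else 0)

/-- HT satisfaction of the program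
    `Π = { v(0) ←,  v(1) ←,  f ← v(X₁), …, v(X_k), m <_ℕ v(X_{k+1}) * ⋯ * v(X_n) * φ̂(X̄) }`
    at the pointed interpretation `I_w`, where `m = 2^(n−k−1)`, the global variables
    `X₁,…,X_k` range over the domain `{0,1}`, and the constraint `m <_ℕ α` is
    satisfied at `I_{w'}` iff `m < ⟦α⟧_ℕ(I_{w''})` for all `w'' ≥ w'`. -/
def progSat {n k : ℕ} (hk : k < n) (φ : (Fin n → Bool) → Bool)
    (I : HTI) (w : W) : Prop :=
  (GAtom.v false ∈ I.at w ∧ GAtom.v true ∈ I.at w) ∧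
  ∀ γ : Fin k → Bool, ∀ w', W.le w w' →
    ((∀ i : Fin k, GAtom.v (γ i) ∈ I.at w') ∧
      (∀ w'', W.le w' w'' → 2 ^ (n - k - 1) < sVal hk φ I w'' γ)) →
    GAtom.f ∈ I.at w'

/-- `J` is an equilibrium model of the program. -/
def EqModel {n k : ℕ} (hk : k < n) (φ : (Fin n → Bool) → Bool) (J : Set GAtom) :
    Prop :=
  progSat hk φ ⟨J, J, le_refl J⟩ .H ∧
    ∀ J' (h : J' ⊆ J), J' ≠ J → ¬ progSat hk φ ⟨J', J, h⟩ .H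

open Classical in
/-- The number of extensions `(a_{k+1}, …, a_n)` making `φ` true under `γ`. -/
noncomputable def extCount {n k : ℕ} (hk : k < n) (φ : (Fin n → Bool) → Bool)
    (γ : Fin k → Bool) : ℕ :=
  (Finset.univ.filter (fun lam : Fin (n - k) → Bool => φ (comb hk γ lam) = true)).card

/-
Every HT-model of `Π` makes the facts `v(0), v(1)` true at both worlds; then every factor
`v(X_j)` has value `1`, so the weighted sum of the last rule is the number of satisfying
extensions, the same at both worlds. Hence the HT-models are exactly the interpretations
whose here-component contains `M = {v(0), v(1)} ∪ {f | some γ has more than m satisfying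
extensions}`, and `M` is the only equilibrium model.
-/

lemma W.le_refl (w : W) : W.le w w := by
  cases w <;> simp [W.le]

lemma HTI.mem_at_of_mem_h (I : HTI) {a : GAtom} (ha : a ∈ I.h) (w : W) : a ∈ I.at w := by
  cases w
  exacts [ha, I.sub ha]

lemma sVal_eq_extCount {n k : ℕ} (hk : k < n) (φ : (Fin n → Bool) → Bool)
    (I : HTI) (w : W) (γ : Fin k → Bool) (hv : ∀ b, GAtom.v b ∈ I.at w) :
    sVal hk φ I w γ = extCount hk φ γ := by
  classical
  rw [sVal, extCount, Finset.card_filter]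
  refine Finset.sum_congr rfl fun lam _ => ?_
  simp [hv]

def emajsatModel {n k : ℕ} (hk : k < n) (φ : (Fin n → Bool) → Bool) : Set GAtom :=
  {a | a = GAtom.f → ∃ γ : Fin k → Bool, 2 ^ (n - k - 1) < extCount hk φ γ}

lemma progSat_H_iff_subset {n k : ℕ} (hk : k < n) (φ : (Fin n → Bool) → Bool) (I : HTI) :
    progSat hk φ I .H ↔ emajsatModel hk φ ⊆ I.h := by
  constructor
  · rintro ⟨⟨h0, h1⟩, hrule⟩ a ha
    cases a with
    | v b => cases b <;> assumption
    | f =>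
      obtain ⟨γ, hγ⟩ := ha rfl
      have hv (w : W) (b : Bool) : GAtom.v b ∈ I.at w :=
        I.mem_at_of_mem_h (by cases b <;> assumption) w
      refine hrule γ .H trivial ⟨fun i => hv .H (γ i), fun w _ => ?_⟩
      rwa [sVal_eq_extCount hk φ I w γ (hv w)]
  · intro hM
    have hv (w : W) (b : Bool) : GAtom.v b ∈ I.at w :=
      I.mem_at_of_mem_h (hM (a := GAtom.v b) (by simp [emajsatModel])) w
    refine ⟨⟨hv .H false, hv .H true⟩, fun γ w _ ⟨_, hγ⟩ => ?_⟩
    refine I.mem_at_of_mem_h (hM fun _ => ⟨γ, ?_⟩) w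
    simpa [sVal_eq_extCount hk φ I w γ (hv w)] using hγ w (W.le_refl w)

lemma minimal_superset_iff_eq {α : Type*} {s t : Set α} :
    (s ⊆ t ∧ ∀ u ⊆ t, u ≠ t → ¬ s ⊆ u) ↔ t = s := by
  constructor
  · rintro ⟨hst, hmin⟩
    by_contra hne
    exact hmin s hst (Ne.symm hne) subset_rfl
  · rintro rfl
    exact ⟨subset_rfl, fun u hu hne hsu => hne (hu.antisymm hsu)⟩

lemma eqModel_iff {n k : ℕ} (hk : k < n) (φ : (Fin n → Bool) → Bool) (J : Set GAtom) :
    EqModel hk φ J ↔ J = emajsatModel hk φ := by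
  simp only [EqModel, progSat_H_iff_subset]
  exact minimal_superset_iff_eq

lemma insert_f_eq_setOf_iff {P : Prop} :
    ({GAtom.f, GAtom.v false, GAtom.v true} : Set GAtom) = {a | a = GAtom.f → P} ↔ P := by
  refine ⟨fun h => (Set.ext_iff.mp h GAtom.f).1 (by simp) rfl, fun hP => ?_⟩
  ext a
  cases a <;> simp [hP]

lemma pair_v_eq_setOf_iff {P : Prop} :
    ({GAtom.v false, GAtom.v true} : Set GAtom) = {a | a = GAtom.f → P} ↔ ¬P := by
  refine ⟨fun h hP => ?_, fun hP => ?_⟩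
  · simpa using (Set.ext_iff.mp h GAtom.f).2 fun _ => hP
  ext a
  cases a <;> simp [hP]

/-- **E-MAJSAT reduction correctness**: `{f, v(0), v(1)}` is an equilibrium model
    of the program iff some assignment `γ` to `x₁,…,x_k` has more than
    `m = 2^(n−k−1)` satisfying extensions, and `{v(0), v(1)}` is an equilibrium
    model iff no such assignment exists. -/
theorem emajsat_reduction {n k : ℕ} (hk : k < n) (φ : (Fin n → Bool) → Bool) :
    (EqModel hk φ {GAtom.f, GAtom.v false, GAtom.v true} ↔
      ∃ γ : Fin k → Bool, 2 ^ (n - k - 1) < extCount hk φ γ)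
    ∧ (EqModel hk φ {GAtom.v false, GAtom.v true} ↔
      ¬ ∃ γ : Fin k → Bool, 2 ^ (n - k - 1) < extCount hk φ γ) := by
  rw [eqModel_iff, eqModel_iff, emajsatModel]
  exact ⟨insert_f_eq_setOf_iff, pair_v_eq_setOf_iff⟩
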